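/- For a stratifiable approximation A on L² over a well-founded index set, a pair (x,y) is a fixpoint of the partial stable operator C_A if and only if for each i ∈ I, (x(i),y(i)) is a fixpoint of the partial stable operator C_{A_i^{(x,y)|_{≺i}}} of the component A_i^{(x,y)|_{≺i}}. -/
import Mathlib


/-- Least fixpoint as the infimum of the prefixpoints (Knaster–Tarski). -/
def lfpSet {α : Type*} [CompleteLattice α] (f : α → α) : α := sInf {a | f a ≤ a}

lemma lfpSet_le {α : Type*} [CompleteLattice α] {f : α → α} {a : α} (h : f a ≤ a) :
    lfpSet f ≤ a := sInf_le h

lemma lfpSet_fixed {α : Type*} [CompleteLattice α] {f : α → α} (hf : Monotone f) :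
    f (lfpSet f) = lfpSet f := by
  have h1 : f (lfpSet f) ≤ lfpSet f := by
    apply le_sInf
    intro a ha
    exact le_trans (hf (sInf_le ha)) ha
  exact le_antisymm h1 (lfpSet_le (hf h1))

/-- Stratified least fixpoint characterization. -/
lemma strat_lfp {I : Type*} [PartialOrder I] [WellFoundedLT I] [DecidableEq I]
    {L : I → Type*} [∀ i, CompleteLattice (L i)]
    (f : (∀ i, L i) → ∀ i, L i) (hf : Monotone f)
    (hs : ∀ a a' : ∀ i, L i, ∀ i : I, (∀ j, j ≤ i → a j = a' j) → f a i = f a' i)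
    (x : ∀ i, L i) :
    lfpSet f = x ↔
      ∀ i, lfpSet (fun t => f (Function.update x i t) i) = x i := by
  have hupd : ∀ i : I, Monotone (fun t : L i => Function.update x i t) := by
    intro i t t' htt j
    rcases eq_or_ne j i with rfl | hj
    · simpa using htt
    · simp [Function.update_of_ne hj]
  have hmono_h : ∀ i : I, Monotone (fun t => f (Function.update x i t) i) := by
    intro i t t' htt
    exact hf (hupd i htt) i
  constructor
  · rintro rfl i
    set z := lfpSet f with hz
    have hfix : f z = z := lfpSet_fixed hf
    -- z i is a fixpoint of h_i
    have hzi : (fun t => f (Function.update z i t) i) (z i) = z i := by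
      simp only [Function.update_eq_self, hfix]
    have hle : lfpSet (fun t => f (Function.update z i t) i) ≤ z i :=
      lfpSet_le (le_of_eq hzi)
    refine le_antisymm hle ?_
    set ℓ := lfpSet (fun t => f (Function.update z i t) i) with hℓ
    have hℓfix : f (Function.update z i ℓ) i = ℓ := lfpSet_fixed (hmono_h i)
    have haz : Function.update z i ℓ ≤ z := by
      intro j
      rcases eq_or_ne j i with rfl | hj
      · simpa using hle
      · simp [Function.update_of_ne hj]
    have hpre : f (Function.update z i ℓ) ≤ Function.update z i ℓ := by
      intro j
      rcases eq_or_ne j i with rfl | hj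
      · simp [hℓfix]
      · simp only [Function.update_of_ne hj]
        calc f (Function.update z i ℓ) j ≤ f z j := hf haz j
          _ = z j := congrFun hfix j
    have := lfpSet_le hpre
    exact le_trans (this i) (le_of_eq (Function.update_self i ℓ z))
  · intro h
    have hfixx : f x = x := by
      funext i
      have := lfpSet_fixed (hmono_h i)
      rw [h i, Function.update_eq_self] at this
      exact this
    set z := lfpSet f with hz
    have hzx : z ≤ x := lfpSet_le (le_of_eq hfixx)
    have hfz : f z = z := lfpSet_fixed hf
    -- show x ≤ z by well-founded induction
    have hxz : ∀ i, x i ≤ z i := by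
      intro i
      induction i using WellFoundedLT.induction with
      | ind i ih =>
        have hag : ∀ j, j ≤ i → Function.update x i (z i) j = z j := by
          intro j hj
          rcases eq_or_ne j i with rfl | hne
          · simp
          · rw [Function.update_of_ne hne]
            exact le_antisymm (ih j (lt_of_le_of_ne hj hne)) (hzx j)
        have hzi : f (Function.update x i (z i)) i = z i := by
          rw [hs _ z i hag]
          exact congrFun hfz i
        rw [← h i]
        exact lfpSet_le (le_of_eq hzi)
    exact le_antisymm hzx (fun i => hxz i)

/-- For a stratifiable approximation A on L² over a well-founded index set, a
pair (x,y) is a fixpoint of the partial stable operator C_A iff for each i,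
(x(i),y(i)) is a fixpoint of the partial stable operator of the component
A_i^{(x,y)|_{≺i}}. -/
theorem partial_stable_fixpoints_stratified
    {I : Type*} [PartialOrder I] [WellFoundedLT I]
    {L : I → Type*} [∀ i, CompleteLattice (L i)]
    (A : ((∀ i, L i) × (∀ i, L i)) → ((∀ i, L i) × (∀ i, L i)))
    (hmono : ∀ p q : (∀ i, L i) × (∀ i, L i), p.1 ≤ q.1 → q.2 ≤ p.2 →
        (A p).1 ≤ (A q).1 ∧ (A q).2 ≤ (A p).2)
    (hstrat : ∀ x y x' y' : ∀ i, L i, ∀ i : I,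
        (∀ j, j ≤ i → x j = x' j ∧ y j = y' j) →
        ∀ j, j ≤ i → (A (x, y)).1 j = (A (x', y')).1 j ∧
          (A (x, y)).2 j = (A (x', y')).2 j)
    (Ac : ∀ i : I,
        ((∀ j : {j : I // j < i}, L j.1) × (∀ j : {j : I // j < i}, L j.1)) →
        (L i × L i) → (L i × L i))
    (hcomp : ∀ (x y : ∀ i, L i) (i : I),
        (A (x, y)).1 i =
          (Ac i (fun j => x j.1, fun j => y j.1) (x i, y i)).1 ∧
        (A (x, y)).2 i =
          (Ac i (fun j => x j.1, fun j => y j.1) (x i, y i)).2) :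
    ∀ x y : ∀ i, L i,
      (lfpSet (fun a => (A (a, y)).1) = x ∧
       lfpSet (fun b => (A (x, b)).2) = y) ↔
      ∀ i : I,
        lfpSet (fun a => (Ac i (fun j => x j.1, fun j => y j.1) (a, y i)).1) = x i ∧
        lfpSet (fun b => (Ac i (fun j => x j.1, fun j => y j.1) (x i, b)).2) = y i := by
  haveI := Classical.decEq I
  intro x y
  -- first component operator
  have hf1 : Monotone (fun a => (A (a, y)).1) :=
    fun a a' h => (hmono (a, y) (a', y) h le_rfl).1
  have hs1 : ∀ a a' : ∀ i, L i, ∀ i : I, (∀ j, j ≤ i → a j = a' j) →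
      (A (a, y)).1 i = (A (a', y)).1 i := by
    intro a a' i hag
    exact (hstrat a y a' y i (fun j hj => ⟨hag j hj, rfl⟩) i le_rfl).1
  have hf2 : Monotone (fun b => (A (x, b)).2) :=
    fun b b' h => (hmono (x, b') (x, b) le_rfl h).2
  have hs2 : ∀ b b' : ∀ i, L i, ∀ i : I, (∀ j, j ≤ i → b j = b' j) →
      (A (x, b)).2 i = (A (x, b')).2 i := by
    intro b b' i hag
    exact (hstrat x b x b' i (fun j hj => ⟨rfl, hag j hj⟩) i le_rfl).2
  have e1 : ∀ i : I, (fun t => (A (Function.update x i t, y)).1 i) =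
      fun t => (Ac i (fun j => x j.1, fun j => y j.1) (t, y i)).1 := by
    intro i
    funext t
    rw [(hcomp (Function.update x i t) y i).1]
    have : (fun j : {j : I // j < i} => Function.update x i t j.1) =
        fun j : {j : I // j < i} => x j.1 := by
      funext j
      exact Function.update_of_ne (ne_of_lt j.2) _ _
    rw [this, Function.update_self]
  have e2 : ∀ i : I, (fun t => (A (x, Function.update y i t)).2 i) =
      fun t => (Ac i (fun j => x j.1, fun j => y j.1) (x i, t)).2 := by
    intro i
    funext t
    rw [(hcomp x (Function.update y i t) i).2]
    have : (fun j : {j : I // j < i} => Function.update y i t j.1) =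
        fun j : {j : I // j < i} => y j.1 := by
      funext j
      exact Function.update_of_ne (ne_of_lt j.2) _ _
    rw [this, Function.update_self]
  have h1 := strat_lfp (fun a => (A (a, y)).1) hf1 hs1 x
  have h2 := strat_lfp (fun b => (A (x, b)).2) hf2 hs2 y
  simp only [e1] at h1
  simp only [e2] at h2
  rw [h1, h2, ← forall_and]
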